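/- For all nodes u, v ∈ V_A ∪ C_B, the weighted distance in the virtual graph G'_A equals the weighted distance in G: wdist_{G'_A}(u, v) = wdist_G(u, v). -/

import Mathlib

open scoped ENNReal

/-- The weighted distance in the graph `H` with (extended-natural-valued)
weight function `w`: the infimum over all walks from `u` to `v` of the total
weight of the walk (the sum of the weights of its edges, counted with
multiplicity); it is `∞` when no walk exists. -/
noncomputable def wdist {V : Type*} (H : SimpleGraph V) (w : V → V → ℕ∞) (u v : V) : ℕ∞ :=
  ⨅ p : H.Walk u v, (p.darts.map (fun d => w d.fst d.snd)).sum

/-- The subgraph of `G` induced on the vertex set `S` (kept on the same vertex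
type: edges of `G` with both endpoints in `S`). -/
def inducedOn {V : Type*} (G : SimpleGraph V) (S : Set V) : SimpleGraph V :=
  SimpleGraph.fromRel (fun u v => G.Adj u v ∧ u ∈ S ∧ v ∈ S)

/-- `C_B`: the set of nodes of `V_B` incident to a cut edge (an edge of `G` with
one endpoint in `V_A` and the other in `V_B`). -/
def cutB {V : Type*} (G : SimpleGraph V) (VA VB : Set V) : Set V :=
  {v | v ∈ VB ∧ ∃ u ∈ VA, G.Adj u v}

/-- The virtual graph `G'_A`: its vertices are `V_A ∪ C_B`, with the edges of
`G_A`, the cut edges, and an edge between every two distinct nodes of `C_B`. -/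
def virtualA {V : Type*} (G : SimpleGraph V) (VA VB : Set V) : SimpleGraph V :=
  SimpleGraph.fromRel (fun u v =>
    (G.Adj u v ∧ u ∈ VA ∧ v ∈ VA) ∨
    (G.Adj u v ∧ u ∈ VA ∧ v ∈ cutB G VA VB) ∨
    (u ∈ cutB G VA VB ∧ v ∈ cutB G VA VB))

open Classical in
/-- The weight function `w'` of the virtual graph `G'_A`: the weight of an edge
between two nodes of `C_B` is the weighted distance between them in `G_B`, and
every other edge keeps its weight from `G`. -/
noncomputable def virtualWeight {V : Type*} (G : SimpleGraph V) (w : V → V → ℕ)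
    (VA VB : Set V) (u v : V) : ℕ∞ :=
  if u ∈ cutB G VA VB ∧ v ∈ cutB G VA VB then
    wdist (inducedOn G VB) (fun a b => (w a b : ℕ∞)) u v
  else (w u v : ℕ∞)

/-! Both inequalities come from one principle: a potential `ψ` with `ψ a ≤ w a b + ψ b` along
every edge satisfies `ψ u ≤ wdist u v + ψ v`. For `wdist G ≤ wdist G'_A` take `ψ = wdist G · v`,
since every edge of `G'_A` is an edge of `G` or is weighted by a distance in `G_B ≤ G`. For the
converse take `ψ x = wdist G'_A x v` on `V_A`, and on `V_B \ V_A` the cheapest way to reach `v` by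
walking inside `G_B` to a node of `C_B` and continuing in `G'_A`; it agrees with `wdist G'_A · v`
on `V_A ∪ C_B`, and a `G`-edge either joins two nodes of `V_A ∪ C_B`, and then it is an edge of
`G'_A` of no larger weight, or lies in `G_B` outside `V_A`. -/

section wdist

variable {V : Type*} {H H' : SimpleGraph V} {w w' : V → V → ℕ∞} {u v x a b : V}

theorem le_wdist_add_of_forall_adj {ψ : V → ℕ∞} (hψ : ∀ a b, H.Adj a b → ψ a ≤ w a b + ψ b)
    (u v : V) : ψ u ≤ wdist H w u v + ψ v := by
  rw [wdist, ENat.iInf_add]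
  refine le_iInf fun p => ?_
  induction p with
  | nil => simp
  | cons h p ih =>
    simp only [SimpleGraph.Walk.darts_cons, List.map_cons, List.sum_cons, add_assoc]
    exact (hψ _ _ h).trans (add_le_add_right ih _)

@[simp]
theorem wdist_self (H : SimpleGraph V) (w : V → V → ℕ∞) (v : V) : wdist H w v v = 0 :=
  nonpos_iff_eq_zero.mp <| (iInf_le _ SimpleGraph.Walk.nil).trans_eq (by simp)

theorem wdist_le_add_of_adj (h : H.Adj a b) : wdist H w a v ≤ w a b + wdist H w b v := by
  rw [wdist, wdist, ENat.add_iInf]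
  exact le_iInf fun p => (iInf_le _ (SimpleGraph.Walk.cons h p)).trans_eq (by simp)

theorem wdist_le_of_adj (h : H.Adj u v) : wdist H w u v ≤ w u v := by
  simpa using wdist_le_add_of_adj (w := w) (v := v) h

theorem wdist_triangle : wdist H w u v ≤ wdist H w u x + wdist H w x v :=
  le_wdist_add_of_forall_adj (fun _ _ h => wdist_le_add_of_adj h) u x

theorem wdist_le_wdist_of_forall_adj (h : ∀ a b, H.Adj a b → wdist H' w' a b ≤ w a b) :
    wdist H' w' u v ≤ wdist H w u v := by
  simpa using le_wdist_add_of_forall_adj (H := H) (ψ := (wdist H' w' · v))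
    (fun a b hab => wdist_triangle.trans (add_le_add_left (h a b hab) _)) u v

theorem wdist_anti (hle : H ≤ H') : wdist H' w u v ≤ wdist H w u v :=
  wdist_le_wdist_of_forall_adj fun _ _ h => wdist_le_of_adj (hle h)

end wdist

section virtual

variable {V : Type*} {G : SimpleGraph V} {w : V → V → ℕ} {S VA VB : Set V} {a b c x : V}

theorem inducedOn_adj : (inducedOn G S).Adj a b ↔ G.Adj a b ∧ a ∈ S ∧ b ∈ S := by
  simp only [inducedOn, SimpleGraph.fromRel_adj]
  constructor
  · rintro ⟨-, h | ⟨h, ha, hb⟩⟩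
    exacts [h, ⟨h.symm, hb, ha⟩]
  · rintro ⟨h, ha, hb⟩
    exact ⟨h.ne, Or.inl ⟨h, ha, hb⟩⟩

theorem inducedOn_le : inducedOn G S ≤ G := fun _ _ h => (inducedOn_adj.mp h).1

theorem virtualA_adj_of_adj (h : G.Adj a b) (ha : a ∈ VA ∪ cutB G VA VB)
    (hb : b ∈ VA ∪ cutB G VA VB) : (virtualA G VA VB).Adj a b := by
  refine SimpleGraph.fromRel_adj _ _ _ |>.mpr ⟨h.ne, ?_⟩
  rcases ha with ha | ha <;> rcases hb with hb | hb <;> simp_all [h.symm]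

theorem virtualA_adj_of_mem_cutB (ha : a ∈ cutB G VA VB) (hb : b ∈ cutB G VA VB) (hab : a ≠ b) :
    (virtualA G VA VB).Adj a b :=
  SimpleGraph.fromRel_adj _ _ _ |>.mpr ⟨hab, Or.inl (Or.inr (Or.inr ⟨ha, hb⟩))⟩

theorem adj_of_virtualA_adj (h : (virtualA G VA VB).Adj a b)
    (hab : ¬(a ∈ cutB G VA VB ∧ b ∈ cutB G VA VB)) : G.Adj a b := by
  obtain ⟨-, (⟨h, -⟩ | ⟨h, -⟩ | h) | (⟨h, -⟩ | ⟨h, -⟩ | h)⟩ := SimpleGraph.fromRel_adj _ _ _ |>.mp h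
  exacts [h, h, absurd h hab, h.symm, h.symm, absurd h.symm hab]

theorem virtualWeight_of_mem_cutB (ha : a ∈ cutB G VA VB) (hb : b ∈ cutB G VA VB) :
    virtualWeight G w VA VB a b = wdist (inducedOn G VB) (fun a b => (w a b : ℕ∞)) a b := by
  simp [virtualWeight, ha, hb]

theorem virtualWeight_of_not_mem_cutB (hab : ¬(a ∈ cutB G VA VB ∧ b ∈ cutB G VA VB)) :
    virtualWeight G w VA VB a b = w a b := by
  rw [virtualWeight, if_neg hab]

theorem virtualWeight_le (h : G.Adj a b) : virtualWeight G w VA VB a b ≤ w a b := by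
  by_cases hab : a ∈ cutB G VA VB ∧ b ∈ cutB G VA VB
  · rw [virtualWeight_of_mem_cutB hab.1 hab.2]
    exact wdist_le_of_adj <| inducedOn_adj.mpr ⟨h, hab.1.1, hab.2.1⟩
  · rw [virtualWeight_of_not_mem_cutB hab]

theorem wdist_le_virtualWeight (h : (virtualA G VA VB).Adj a b) :
    wdist G (fun a b => (w a b : ℕ∞)) a b ≤ virtualWeight G w VA VB a b := by
  by_cases hab : a ∈ cutB G VA VB ∧ b ∈ cutB G VA VB
  · rw [virtualWeight_of_mem_cutB hab.1 hab.2]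
    exact wdist_anti inducedOn_le
  · rw [virtualWeight_of_not_mem_cutB hab]
    exact wdist_le_of_adj (adj_of_virtualA_adj h hab)

theorem wdist_le_wdist_virtualA (u v : V) :
    wdist G (fun a b => (w a b : ℕ∞)) u v ≤ wdist (virtualA G VA VB) (virtualWeight G w VA VB) u v :=
  wdist_le_wdist_of_forall_adj fun _ _ h => wdist_le_virtualWeight h

theorem wdist_virtualA_le_wdist_inducedOn (ha : a ∈ cutB G VA VB) (hb : b ∈ cutB G VA VB) :
    wdist (virtualA G VA VB) (virtualWeight G w VA VB) a b ≤
      wdist (inducedOn G VB) (fun a b => (w a b : ℕ∞)) a b := by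
  rcases eq_or_ne a b with rfl | hab
  · simp
  · rw [← virtualWeight_of_mem_cutB ha hb]
    exact wdist_le_of_adj (virtualA_adj_of_mem_cutB ha hb hab)

open Classical in
noncomputable def virtualPotential (G : SimpleGraph V) (w : V → V → ℕ) (VA VB : Set V)
    (c x : V) : ℕ∞ :=
  if x ∈ VA then wdist (virtualA G VA VB) (virtualWeight G w VA VB) x c
  else ⨅ s ∈ cutB G VA VB, wdist (inducedOn G VB) (fun a b => (w a b : ℕ∞)) x s +
    wdist (virtualA G VA VB) (virtualWeight G w VA VB) s c

theorem virtualPotential_of_not_mem (hx : x ∉ VA) :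
    virtualPotential G w VA VB c x = ⨅ s ∈ cutB G VA VB,
      wdist (inducedOn G VB) (fun a b => (w a b : ℕ∞)) x s +
        wdist (virtualA G VA VB) (virtualWeight G w VA VB) s c := by
  rw [virtualPotential, if_neg hx]

theorem virtualPotential_eq_wdist (hx : x ∈ VA ∪ cutB G VA VB) :
    virtualPotential G w VA VB c x = wdist (virtualA G VA VB) (virtualWeight G w VA VB) x c := by
  by_cases hxA : x ∈ VA
  · rw [virtualPotential, if_pos hxA]
  have hxC : x ∈ cutB G VA VB := hx.resolve_left hxA
  rw [virtualPotential_of_not_mem hxA]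
  refine le_antisymm ((iInf₂_le x hxC).trans_eq (by simp)) (le_iInf₂ fun s hs => ?_)
  exact wdist_triangle.trans (add_le_add_left (wdist_virtualA_le_wdist_inducedOn hxC hs) _)

theorem virtualPotential_le_add_of_inducedOn_adj (h : (inducedOn G VB).Adj a b) (ha : a ∉ VA)
    (hb : b ∉ VA) :
    virtualPotential G w VA VB c a ≤ w a b + virtualPotential G w VA VB c b := by
  rw [virtualPotential_of_not_mem ha, virtualPotential_of_not_mem hb, ENat.add_iInf₂]
  refine iInf₂_mono fun s _ => ?_
  rw [← add_assoc]
  exact add_le_add_left (wdist_le_add_of_adj h) _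

theorem virtualPotential_le_add_of_adj (hunion : VA ∪ VB = Set.univ) (h : G.Adj a b) :
    virtualPotential G w VA VB c a ≤ w a b + virtualPotential G w VA VB c b := by
  have hB : ∀ y, y ∉ VA → y ∈ VB := fun y hy =>
    ((hunion ▸ Set.mem_univ y : y ∈ VA ∪ VB)).resolve_left hy
  by_cases hab : a ∈ VA ∪ cutB G VA VB ∧ b ∈ VA ∪ cutB G VA VB
  · rw [virtualPotential_eq_wdist hab.1, virtualPotential_eq_wdist hab.2]
    exact (wdist_le_add_of_adj (virtualA_adj_of_adj h hab.1 hab.2)).trans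
      (add_le_add_left (virtualWeight_le h) _)
  -- a node of `V_B` adjacent to `V_A` is in `C_B`, so the edge misses `V_A` entirely
  have haA : a ∉ VA := fun haA => hab ⟨Or.inl haA, (em (b ∈ VA)).imp_right
    fun hbA => ⟨hB b hbA, a, haA, h⟩⟩
  have hbA : b ∉ VA := fun hbA => hab ⟨Or.inr ⟨hB a haA, b, hbA, h.symm⟩, Or.inl hbA⟩
  exact virtualPotential_le_add_of_inducedOn_adj (inducedOn_adj.mpr ⟨h, hB a haA, hB b hbA⟩)
    haA hbA

end virtual

theorem wdist_virtualA_eq_wdist_general {V : Type*}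
    (G : SimpleGraph V) (w : V → V → ℕ)
    (VA VB : Set V) (hunion : VA ∪ VB = Set.univ)
    (u v : V) (hu : u ∈ VA ∪ cutB G VA VB) (hv : v ∈ VA ∪ cutB G VA VB) :
    wdist (virtualA G VA VB) (virtualWeight G w VA VB) u v =
      wdist G (fun a b => (w a b : ℕ∞)) u v := by
  refine le_antisymm ?_ (wdist_le_wdist_virtualA u v)
  calc wdist (virtualA G VA VB) (virtualWeight G w VA VB) u v
      = virtualPotential G w VA VB v u := (virtualPotential_eq_wdist hu).symm
    _ ≤ wdist G (fun a b => (w a b : ℕ∞)) u v + virtualPotential G w VA VB v v :=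
      le_wdist_add_of_forall_adj (fun _ _ h => virtualPotential_le_add_of_adj hunion h) u v
    _ = wdist G (fun a b => (w a b : ℕ∞)) u v := by
      rw [virtualPotential_eq_wdist hv, wdist_self, add_zero]

/-- for a finite weighted graph `G` whose vertices are partitioned
into `V_A ∪ V_B`, and for all nodes `u, v ∈ V_A ∪ C_B`, the weighted distance in
the virtual graph `G'_A` equals the weighted distance in `G`. -/
theorem wdist_virtualA_eq_wdist {V : Type*} [Fintype V]
    (G : SimpleGraph V) (w : V → V → ℕ) (hw : ∀ u v, w u v = w v u)
    (VA VB : Set V) (hdisj : Disjoint VA VB) (hunion : VA ∪ VB = Set.univ)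
    (u v : V) (hu : u ∈ VA ∪ cutB G VA VB) (hv : v ∈ VA ∪ cutB G VA VB) :
    wdist (virtualA G VA VB) (virtualWeight G w VA VB) u v =
      wdist G (fun a b => (w a b : ℕ∞)) u v :=
  wdist_virtualA_eq_wdist_general G w VA VB hunion u v hu hv
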